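/- arXiv:2209.05836 — 3 statements merged into one kernel-verified Lean document; each statement's English description precedes it below -/
import Mathlib

section
/- The Bernoulli numbers satisfy: for every integer k ≥ 1, 2^k B_k / k! = Σ_{n=1}^{k} Σ_{k_1+⋯+k_n = k, k_i ≥ 1} (c_{k_1} ⋯ c_{k_n}) / n!, where c_j := (−1)^{j+1} 2^j B_j / (j · j!). -/
/-!
Let `F = ∑ c_j X^j`. Since `j c_j = (-1)^(j+1) 2^j B_j / j!`, the series `X F'` is `1 - B(-2X)`,
where `B(X) = X/(e^X - 1)` and `B(-X)` is `bernoulli'PowerSeries`. Differentiating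
`B(X) (e^X - 1) = X` gives `X B' = (1 - B(-X)) B`, so `G(X) = B(2X)` satisfies `G' = G F'`.
So does `exp(F)`, and both have constant term `1`; hence `B(2X) = exp(F(X))`. Expanding
`exp(F) = ∑ F^n / n!` and reading `[X^k] F^n` as a sum over the compositions of `k` into `n`
parts gives the identity.
-/

open PowerSeries Finset

namespace List

variable {M N : Type*} [DecidableEq M]

theorem prod_range_length_map_toFinsupp [Zero M] [CommMonoid N] (L : List M) (f : M → N) :
    ∏ i ∈ Finset.range L.length, f (L.toFinsupp i) = (L.map f).prod := by
  rw [Finset.prod_range, ← List.prod_ofFn]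
  simp

theorem sum_range_length_toFinsupp [AddCommMonoid M] (L : List M) :
    ∑ i ∈ Finset.range L.length, L.toFinsupp i = L.sum := by
  rw [Finset.sum_range, ← List.sum_ofFn]
  simp

theorem eq_of_toFinsupp_eq_of_length_eq [Zero M] {L₁ L₂ : List M}
    (hlen : L₁.length = L₂.length) (h : L₁.toFinsupp = L₂.toFinsupp) : L₁ = L₂ := by
  refine List.ext_getElem hlen fun i h₁ h₂ => ?_
  rw [← toFinsupp_apply_lt _ _ h₁, ← toFinsupp_apply_lt _ _ h₂, h]

theorem toFinsupp_map_range [Zero M] {n : ℕ} (l : ℕ →₀ M) (hl : l.support ⊆ Finset.range n) :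
    ((List.range n).map l).toFinsupp = l := by
  ext i
  rcases lt_or_ge i n with hi | hi
  · simp [hi]
  · rw [toFinsupp_apply_le _ _ (by simpa using hi), eq_comm, ← Finsupp.notMem_support_iff]
    exact fun h => by simpa using hi.trans_lt (Finset.mem_range.1 (hl h))

end List

namespace PowerSeries

theorem coeff_mk_pow_eq_sum_compositions {R : Type*} [CommSemiring R] {a : ℕ → R} (ha : a 0 = 0)
    (n k : ℕ) :
    coeff k (mk a ^ n) = ∑ c : Composition k with c.length = n, (c.blocks.map a).prod := by
  have weight (c : Composition k) :
      (c.blocks.map a).prod = ∏ i ∈ range c.length, coeff (c.blocks.toFinsupp i) (mk a) := by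
    simp only [coeff_mk, ← c.blocks_length, List.prod_range_length_map_toFinsupp]
  rw [coeff_pow, eq_comm]
  refine sum_bij_ne_zero (fun c _ _ => c.blocks.toFinsupp) ?_ ?_ ?_ ?_
  · rintro c hc -
    obtain rfl := (mem_filter.1 hc).2
    rw [mem_finsuppAntidiag, ← c.blocks_length, List.sum_range_length_toFinsupp]
    exact ⟨c.blocks_sum, List.toFinsupp_support_subset _⟩
  · rintro c₁ h₁ - c₂ h₂ - h
    refine Composition.ext (List.eq_of_toFinsupp_eq_of_length_eq ?_ h)
    simp only [mem_filter] at h₁ h₂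
    simp [h₁.2, h₂.2]
  · intro l hl hne
    rw [mem_finsuppAntidiag] at hl
    have hblocks : ((List.range n).map l).toFinsupp = l := List.toFinsupp_map_range l hl.2
    have hpos : ∀ i ∈ Finset.range n, 0 < l i := fun i hi =>
      Nat.pos_of_ne_zero fun h0 => hne (prod_eq_zero hi (by simp [h0, ha]))
    have hsum : ((List.range n).map l).sum = k := by
      rw [← List.sum_range_length_toFinsupp, hblocks, List.length_map, List.length_range, hl.1]
    let c : Composition k := ⟨(List.range n).map l, by simpa using hpos, hsum⟩
    have hlen : c.length = n := by simp [c, Composition.length]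
    refine ⟨c, by simpa using hlen, ?_, hblocks⟩
    rwa [weight, hlen, hblocks]
  · rintro c hc -
    obtain rfl := (mem_filter.1 hc).2
    exact weight c

theorem coeff_exp_subst_mk {K : Type*} [Field K] [Algebra ℚ K] {a : ℕ → K} (ha : a 0 = 0)
    (k : ℕ) :
    coeff k ((exp K).subst (mk a))
      = ∑ c : Composition k, (c.blocks.map a).prod / c.length.factorial := by
  have hsubst : HasSubst (mk a) := HasSubst.of_constantCoeff_zero' (by simp [ha])
  have hvanish : ∀ n, k < n → coeff k (mk a ^ n) = 0 := fun n hn => by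
    rw [coeff_mk_pow_eq_sum_compositions ha]
    exact sum_eq_zero fun c hc => absurd (mem_filter.1 hc).2 (c.length_le.trans_lt hn).ne
  rw [coeff_subst' hsubst, finsum_eq_sum_of_support_subset (s := range (k + 1)) _
      fun n hn => mem_range.2 (not_le.1 fun h => hn (by simp [hvanish n h])),
    ← sum_fiberwise_of_maps_to (g := Composition.length)
      fun c _ => mem_range.2 (Nat.lt_succ_of_le c.length_le)]
  refine sum_congr rfl fun n _ => ?_
  rw [coeff_mk_pow_eq_sum_compositions ha, coeff_exp, smul_eq_mul, mul_sum]
  refine sum_congr rfl fun c hc => ?_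
  rw [(mem_filter.1 hc).2]
  simp [div_eq_inv_mul]

theorem derivative_exp_subst {A : Type*} [CommRing A] [Algebra ℚ A] {f : A⟦X⟧}
    (hf : HasSubst f) :
    d⁄dX A ((exp A).subst f) = (exp A).subst f * d⁄dX A f := by
  rw [derivative_subst hf, derivative_exp]

theorem eq_of_derivative_eq_mul {R : Type*} [CommRing R] [IsAddTorsionFree R] {f g h : R⟦X⟧}
    (hf : d⁄dX R f = f * h) (hg : d⁄dX R g = g * h) (h0 : constantCoeff f = constantCoeff g) :
    f = g := by
  rw [← sub_eq_zero]
  set w := f - g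
  have hw : d⁄dX R w = w * h := by simp only [w, map_sub, hf, hg, sub_mul]
  ext n
  induction n using Nat.strong_induction_on with
  | _ n ih =>
    rcases n with _ | m
    · simp [w, h0]
    · have hm := congrArg (coeff m) hw
      rw [coeff_derivative, coeff_mul, sum_eq_zero fun p hp => by
        rw [ih p.1 (Nat.antidiagonal.fst_lt hp), map_zero, zero_mul]] at hm
      have hsmul : (m + 1) • coeff (m + 1) w = 0 := by
        rw [nsmul_eq_mul, mul_comm]
        exact_mod_cast hm
      simpa using (smul_eq_zero.1 hsmul).resolve_left m.succ_ne_zero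

theorem X_mul_derivative_rescale {R : Type*} [CommSemiring R] (a : R) (f : R⟦X⟧) :
    X * d⁄dX R (rescale a f) = rescale a (X * d⁄dX R f) := by
  ext (_ | n)
  · simp only [coeff_zero_X_mul, coeff_rescale, mul_zero]
  · simp only [coeff_succ_X_mul, coeff_derivative, coeff_rescale]
    ring

end PowerSeries

theorem X_mul_derivative_bernoulliPowerSeries :
    X * d⁄dX ℚ (bernoulliPowerSeries ℚ)
      = (1 - bernoulli'PowerSeries ℚ) * bernoulliPowerSeries ℚ := by
  have hE : exp ℚ - 1 ≠ 0 := fun h => by simpa [coeff_exp] using congrArg (coeff 1) h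
  have hB := bernoulliPowerSeries_mul_exp_sub_one ℚ
  have hB' := bernoulli'PowerSeries_mul_exp_sub_one ℚ
  have hD : d⁄dX ℚ (bernoulliPowerSeries ℚ) * (exp ℚ - 1)
      + bernoulliPowerSeries ℚ * exp ℚ = 1 := by
    simpa [Derivation.leibniz, derivative_exp, smul_eq_mul, add_comm, mul_comm]
      using congrArg (d⁄dX ℚ) hB
  apply mul_right_cancel₀ (pow_ne_zero 2 hE)
  linear_combination (X : ℚ⟦X⟧) * (exp ℚ - 1) * hD - (exp ℚ - 1 + X * exp ℚ) * hB
    + bernoulliPowerSeries ℚ * (exp ℚ - 1) * hB' + X * exp ℚ * hB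

/-- The coefficients of `log (2X / (e^(2X) - 1))`; the value at `0` is `0` because `x / 0 = 0`. -/
noncomputable def logBernoulliCoeff (j : ℕ) : ℚ :=
  (-1) ^ (j + 1) * 2 ^ j * bernoulli j / (j * j.factorial)

theorem X_mul_derivative_mk_logBernoulliCoeff :
    X * d⁄dX ℚ (mk logBernoulliCoeff) = rescale 2 (1 - bernoulli'PowerSeries ℚ) := by
  ext (_ | n)
  · rw [coeff_zero_X_mul, coeff_rescale]
    simp [bernoulli'PowerSeries]
  · simp only [coeff_succ_X_mul, coeff_derivative, coeff_mk, coeff_rescale, map_sub, coeff_one,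
      bernoulli'PowerSeries, logBernoulliCoeff, bernoulli'_eq_bernoulli, eq_ratCast, Rat.cast_id]
    push_cast [Nat.factorial_succ]
    field_simp
    ring

theorem derivative_rescale_two_bernoulliPowerSeries :
    d⁄dX ℚ (rescale 2 (bernoulliPowerSeries ℚ))
      = rescale 2 (bernoulliPowerSeries ℚ) * d⁄dX ℚ (mk logBernoulliCoeff) := by
  apply mul_left_cancel₀ (X_ne_zero (R := ℚ))
  rw [X_mul_derivative_rescale, X_mul_derivative_bernoulliPowerSeries, mul_left_comm,
    X_mul_derivative_mk_logBernoulliCoeff, map_mul, mul_comm]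

theorem rescale_two_bernoulliPowerSeries_eq_exp_subst :
    rescale 2 (bernoulliPowerSeries ℚ) = (exp ℚ).subst (mk logBernoulliCoeff) := by
  have hsubst : HasSubst (mk logBernoulliCoeff) :=
    HasSubst.of_constantCoeff_zero' (by simp [logBernoulliCoeff])
  refine eq_of_derivative_eq_mul derivative_rescale_two_bernoulliPowerSeries
    (derivative_exp_subst hsubst) ?_
  rw [← coeff_zero_eq_constantCoeff_apply, ← coeff_zero_eq_constantCoeff_apply, coeff_rescale,
    coeff_exp_subst_mk (by simp [logBernoulliCoeff]), Fintype.sum_eq_single (Composition.ones 0)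
      fun c hc => (hc (by simp [Composition.ext_iff])).elim]
  simp [bernoulliPowerSeries]

theorem stmt8_general (k : ℕ) :
    (2 ^ k * bernoulli k) / (k.factorial : ℚ)
      = ∑ c : Composition k,
          (c.blocks.map (fun j : ℕ =>
              ((-1 : ℚ) ^ (j + 1) * 2 ^ j * bernoulli j) / ((j : ℚ) * (j.factorial : ℚ)))).prod
            / (c.length.factorial : ℚ) := by
  have h := congrArg (coeff k) rescale_two_bernoulliPowerSeries_eq_exp_subst
  rw [coeff_rescale, coeff_exp_subst_mk (by simp [logBernoulliCoeff]), bernoulliPowerSeries,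
    coeff_mk] at h
  rw [mul_div_assoc]
  exact h

/-- The Bernoulli numbers satisfy, for every k ≥ 1:
2^k B_k / k! = Σ_{n=1}^{k} Σ_{k₁+⋯+kₙ=k, kᵢ≥1} (c_{k₁}⋯c_{kₙ})/n!,
where c_j = (−1)^{j+1} 2^j B_j / (j·j!).  The double sum over n and over
ordered compositions of k into n positive parts is expressed as a single
sum over all compositions of k (the length of the composition playing the
role of n). -/
theorem stmt8 (k : ℕ) (hk : 1 ≤ k) :
    (2 ^ k * bernoulli k) / (k.factorial : ℚ)
      = ∑ c : Composition k,
          (c.blocks.map (fun j : ℕ =>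
              ((-1 : ℚ) ^ (j + 1) * 2 ^ j * bernoulli j) / ((j : ℚ) * (j.factorial : ℚ)))).prod
            / (c.length.factorial : ℚ) :=
  stmt8_general k
end

section
/- Let n ≥ 5 be odd and set N = (n−1)/2. Assuming B_{n−1} ≠ 0, let b_k = −(1/B_{n−1}) C(n−1,k) B_k B_{n−1−k}/(k(n−1−k)) for even k with 2 ≤ k < N, and let b_N be half this value when k = N is even. Then Σ_{k even, 2≤k≤N} k(2N−k) b_k = N + 1/2. -/
set_option linter.unnecessarySeqFocus false

open PowerSeries Finset

lemma my_derivative_exp : d⁄dX ℚ (exp ℚ) = exp ℚ := by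
  ext n
  rw [coeff_derivative, coeff_exp, coeff_exp]
  simp only [Algebra.algebraMap_self, map_div₀, map_one, map_natCast, RingHom.id_apply]
  rw [Nat.factorial_succ]
  have h2 : ((n.factorial : ℕ) : ℚ) ≠ 0 := by exact_mod_cast n.factorial_ne_zero
  field_simp
  push_cast
  ring

lemma my_key : bernoulliPowerSeries ℚ * bernoulliPowerSeries ℚ
    = (1 - X) * bernoulliPowerSeries ℚ - X * (d⁄dX ℚ (bernoulliPowerSeries ℚ)) := by
  set B := bernoulliPowerSeries ℚ
  have hX : B * (exp ℚ - 1) = X := bernoulliPowerSeries_mul_exp_sub_one ℚ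
  have hd : d⁄dX ℚ (B * (exp ℚ - 1)) = 1 := by rw [hX, derivative_X]
  have h2 : d⁄dX ℚ B * (exp ℚ - 1) + B * exp ℚ = 1 := by
    simp only [Derivation.leibniz, smul_eq_mul, map_sub, my_derivative_exp,
      Derivation.map_one_eq_zero, sub_zero] at hd
    linear_combination hd
  linear_combination B * h2 - (d⁄dX ℚ B) * hX - B * hX

lemma my_euler (m : ℕ) :
    ∑ k ∈ range (m + 2), ((m + 1).choose k : ℚ) * bernoulli k * bernoulli (m + 1 - k)
      = (1 - ((m : ℚ) + 1)) * bernoulli (m + 1) - ((m : ℚ) + 1) * bernoulli m := by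
  have h := congrArg (coeff (m + 1)) my_key
  rw [sub_mul, one_mul, map_sub, map_sub, coeff_succ_X_mul, coeff_succ_X_mul,
    coeff_derivative, coeff_mul, Nat.sum_antidiagonal_eq_sum_range_succ_mk] at h
  simp only [bernoulliPowerSeries, coeff_mk, Algebra.algebraMap_self, RingHom.id_apply] at h
  have hfac : ∀ j : ℕ, (j.factorial : ℚ) ≠ 0 := fun j => by
    exact_mod_cast j.factorial_ne_zero
  have hterm : ∀ k ∈ range (m + 2),
      ((m + 1).choose k : ℚ) * bernoulli k * bernoulli (m + 1 - k)
        = ((m + 1).factorial : ℚ) *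
          (bernoulli k / k.factorial * (bernoulli (m + 1 - k) / (m + 1 - k).factorial)) := by
    intro k hk
    rw [mem_range] at hk
    have hk' : k ≤ m + 1 := by omega
    rw [Nat.cast_choose ℚ hk']
    field_simp
  rw [Finset.sum_congr rfl hterm, ← Finset.mul_sum, h, Nat.factorial_succ]
  push_cast
  field_simp
  ring

lemma my_euler' (m : ℕ) (hm : 1 ≤ m) :
    ∑ k ∈ range (m + 1), (m.choose k : ℚ) * bernoulli k * bernoulli (m - k)
      = (1 - (m : ℚ)) * bernoulli m - (m : ℚ) * bernoulli (m - 1) := by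
  cases m with
  | zero => omega
  | succ M =>
    have := my_euler M
    simpa [Nat.succ_sub_one] using this

lemma my_bodd {k : ℕ} (h : Odd k) (h1 : 1 < k) : bernoulli k = 0 := by
  rw [bernoulli_eq_bernoulli'_of_ne_one (by omega)]
  exact bernoulli'_eq_zero_of_odd h h1

/-- Let n ≥ 5 be odd, N = (n−1)/2, and for even k with 2 ≤ k ≤ N set
b_k = −(1/B_{n−1})·C(n−1,k)·B_k·B_{n−1−k}/(k(n−1−k)), with an extra factor 1/2
when k = N.  Then Σ_{k even, 2≤k≤N} k(2N−k) b_k = N + 1/2 (assuming B_{n−1} ≠ 0). -/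
theorem stmt12 (n : ℕ) (hn : 5 ≤ n) (hodd : Odd n)
    (hB : bernoulli (n - 1) ≠ 0) :
    let N := (n - 1) / 2
    let b : ℕ → ℚ := fun k =>
      (if k = N then (1 : ℚ) / 2 else 1) *
        (-(1 / bernoulli (n - 1)) * ((n - 1).choose k : ℚ) * bernoulli k
            * bernoulli (n - 1 - k) / ((k : ℚ) * ((n : ℚ) - 1 - (k : ℚ))))
    ∑ k ∈ (Finset.Icc 2 N).filter (fun k => Even k),
        (k : ℚ) * (2 * (N : ℚ) - (k : ℚ)) * b k
      = (N : ℚ) + 1 / 2 := by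
  intro N b
  have hbdef : ∀ k, b k = (if k = N then (1 : ℚ) / 2 else 1) *
        (-(1 / bernoulli (n - 1)) * ((n - 1).choose k : ℚ) * bernoulli k
            * bernoulli (n - 1 - k) / ((k : ℚ) * ((n : ℚ) - 1 - (k : ℚ)))) := fun _ => rfl
  have hNdef : N = (n - 1) / 2 := rfl
  obtain ⟨t, ht⟩ := hodd
  set M := n - 1 with hMdef
  have hm2 : M = 2 * N := by omega
  have hM4 : 4 ≤ M := by omega
  set T : ℕ → ℚ := fun k => ((M.choose k : ℚ) * bernoulli k * bernoulli (M - k)) with hT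
  -- B_{M-1} = 0
  have hB1 : bernoulli (M - 1) = 0 := by
    refine my_bodd ⟨N - 1, by omega⟩ (by omega)
  -- full sum
  have hfull : ∑ k ∈ range (M + 1), T k = (1 - (M : ℚ)) * bernoulli M := by
    rw [hT]
    rw [my_euler' M (by omega), hB1]
    ring
  -- restrict to even interior
  set s2 := (Icc 2 (M - 2)).filter (fun k => Even k) with hs2
  have hsub : insert 0 (insert M s2) ⊆ range (M + 1) := by
    intro k hk
    simp only [hs2, mem_insert, mem_filter, mem_Icc, mem_range] at hk ⊢
    rcases hk with h | h | ⟨⟨h1, h2⟩, _⟩ <;> omega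
  have hzero : ∀ k ∈ range (M + 1), k ∉ insert 0 (insert M s2) → T k = 0 := by
    intro k hk hk'
    simp only [mem_range] at hk
    simp only [hs2, mem_insert, mem_filter, mem_Icc, not_or, not_and] at hk'
    obtain ⟨hk0, hkM, hkI⟩ := hk'
    rcases Nat.even_or_odd k with he | ho
    · exfalso
      apply hkI ⟨by
        rw [Nat.even_iff] at he; omega, by
        rw [Nat.even_iff] at he; omega⟩ he
    · rcases eq_or_ne k 1 with h1 | h1
      · simp [hT, h1, hB1]
      · have : bernoulli k = 0 := my_bodd ho (by omega)
        simp [hT, this]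
  have hT0 : T 0 = bernoulli M := by simp [hT]
  have hTM : T M = bernoulli M := by simp [hT]
  have h0notin : (0 : ℕ) ∉ insert M s2 := by
    simp only [hs2, mem_insert, mem_filter, mem_Icc]
    push_neg
    exact ⟨by omega, fun h => absurd h.1 (by omega)⟩
  have hMnotin : M ∉ s2 := by
    simp only [hs2, mem_filter, mem_Icc]
    push_neg
    intro h
    omega
  have hSeven : ∑ k ∈ s2, T k = -((M : ℚ) + 1) * bernoulli M := by
    have := Finset.sum_subset hsub hzero
    rw [Finset.sum_insert h0notin, Finset.sum_insert hMnotin, hfull, hT0, hTM] at this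
    linarith [this]
  -- split and reflect
  set sA := (Icc 2 N).filter (fun k => Even k) with hsA
  set sU := (Icc (N + 1) (M - 2)).filter (fun k => Even k) with hsU
  set sR := (Icc 2 (N - 1)).filter (fun k => Even k) with hsR
  have hsplit : s2 = sA ∪ sU := by
    ext k
    simp only [hs2, hsA, hsU, mem_union, mem_filter, mem_Icc, Nat.even_iff]
    omega
  have hdisj : Disjoint sA sU := by
    rw [Finset.disjoint_left]
    intro k h1 h2
    simp only [hsA, hsU, mem_filter, mem_Icc] at h1 h2
    omega
  have hrefl : ∑ k ∈ sU, T k = ∑ k ∈ sR, T k := by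
    refine Finset.sum_nbij' (fun k => M - k) (fun k => M - k) ?_ ?_ ?_ ?_ ?_
    · intro a ha
      simp only [hsU, hsR, mem_filter, mem_Icc, Nat.even_iff] at ha ⊢
      omega
    · intro a ha
      simp only [hsU, hsR, mem_filter, mem_Icc, Nat.even_iff] at ha ⊢
      omega
    · intro a ha
      simp only [hsU, mem_filter, mem_Icc] at ha
      show M - (M - a) = a
      omega
    · intro a ha
      simp only [hsR, mem_filter, mem_Icc] at ha
      show M - (M - a) = a
      omega
    · intro a ha
      simp only [hsU, mem_filter, mem_Icc] at ha
      simp only [hT]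
      rw [Nat.choose_symm (by omega), Nat.sub_sub_self (by omega)]
      ring
  have hA : ∑ k ∈ sA, T k = ∑ k ∈ sR, T k + (if N ∈ sA then T N else 0) := by
    by_cases hNin : N ∈ sA
    · rw [if_pos hNin, ← Finset.sum_erase_add _ _ hNin]
      congr 2
      ext k
      simp only [hsA, hsR, Finset.mem_erase, mem_filter, mem_Icc, Nat.even_iff]
      omega
    · rw [if_neg hNin, add_zero]
      congr 1
      simp only [hsA, mem_filter, mem_Icc, Nat.even_iff] at hNin
      push_neg at hNin
      ext k
      simp only [hsA, hsR, mem_filter, mem_Icc, Nat.even_iff]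
      omega
  have hhalf : ∑ k ∈ sA, (if k = N then (1 : ℚ) / 2 else 1) * T k
      = -(((M : ℚ) + 1) / 2) * bernoulli M := by
    have e1 : ∑ k ∈ sA, (if k = N then (1 : ℚ) / 2 else 1) * T k
        = ∑ k ∈ sA, T k - (1 / 2) * (if N ∈ sA then T N else 0) := by
      rw [Finset.sum_congr rfl (fun k _ => show (if k = N then (1 : ℚ) / 2 else 1) * T k
          = T k - (if k = N then (1 / 2) * T k else 0) by split_ifs <;> ring),
        Finset.sum_sub_distrib, Finset.sum_ite_eq' sA N (fun k => (1 / 2) * T k)]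
      split_ifs <;> ring
    have e2 : ∑ k ∈ s2, T k = ∑ k ∈ sA, T k + ∑ k ∈ sU, T k := by
      rw [hsplit, Finset.sum_union hdisj]
    rw [hSeven, hrefl] at e2
    rw [e1]
    linarith [hA, e2]
  -- final computation
  have hterm : ∀ k ∈ sA, (k : ℚ) * (2 * (N : ℚ) - (k : ℚ)) * b k
      = -(1 / bernoulli M) * ((if k = N then (1 : ℚ) / 2 else 1) * T k) := by
    intro k hk
    simp only [hsA, mem_filter, mem_Icc] at hk
    obtain ⟨⟨hk2, hkN⟩, _⟩ := hk
    have hkM : k ≤ M := by omega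
    have e1 : ((M - k : ℕ) : ℚ) = 2 * (N : ℚ) - (k : ℚ) := by
      rw [Nat.cast_sub hkM, hm2]
      push_cast
      ring
    have e2 : (n : ℚ) - 1 - (k : ℚ) = ((M - k : ℕ) : ℚ) := by
      rw [Nat.cast_sub hkM, hMdef, Nat.cast_sub (by omega)]
      push_cast
      ring
    have hk0 : (k : ℚ) ≠ 0 := by positivity
    have hMk0 : ((M - k : ℕ) : ℚ) ≠ 0 := by
      have : 2 ≤ M - k := by omega
      positivity
    have hc : ∀ A : ℚ, (k : ℚ) * ((M - k : ℕ) : ℚ) *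
        ((if k = N then (1 : ℚ) / 2 else 1) * (A / ((k : ℚ) * ((M - k : ℕ) : ℚ))))
          = (if k = N then (1 : ℚ) / 2 else 1) * A := by
      intro A
      have hd : ((M : ℚ) - (k : ℚ)) ≠ 0 := by
        rw [← Nat.cast_sub hkM]; exact hMk0
      split_ifs <;> field_simp <;> try ring
    rw [hbdef k, e2, ← e1, hc]
    simp only [hT]
    ring
  rw [Finset.sum_congr rfl hterm, ← Finset.mul_sum, hhalf]
  have hMcast : (M : ℚ) = 2 * (N : ℚ) := by exact_mod_cast congrArg (Nat.cast : ℕ → ℚ) hm2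
  rw [hMcast]
  have hBM : bernoulli M ≠ 0 := hB
  field_simp
end

section
/- Let ω be an n-plectic form on M. The subspace Ham^{n−1}_∞(M,ω) := {(v_α, α) : dα = −ι_{v_α}ω} of sections of TM ⊕ Λ^{n−1}T*M is closed under the ω-twisted higher Courant bracket [·,·]_ω. -/
/-- Let ω be an n-plectic form on M.  The subspace
Ham^{n−1}_∞(M,ω) = {(v_α, α) : dα = −ι_{v_α}ω} of sections of TM ⊕ Λ^{n−1}T*M is
closed under the ω-twisted higher Courant bracket
[e₁,e₂]_ω = ([X₁,X₂], L_{X₁}α₂ − L_{X₂}α₁ − ½d(ι_{X₁}α₂ − ι_{X₂}α₁) + ι_{X₁}ι_{X₂}ω).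
Abstractly, `𝔛` is the Lie algebra of vector fields and `Ω` the differential forms
with the Cartan calculus operators d, ι, L; ω is closed. -/
theorem stmt18
    (𝔛 Ω : Type) [LieRing 𝔛] [AddCommGroup Ω] [Module ℝ Ω]
    (d : Ω → Ω) (ι : 𝔛 → Ω → Ω) (L : 𝔛 → Ω → Ω)
    (hd_add : ∀ a b, d (a + b) = d a + d b)
    (hd_smul : ∀ (r : ℝ) a, d (r • a) = r • d a)
    (hdd : ∀ a, d (d a) = 0)
    (hι_add : ∀ Y a b, ι Y (a + b) = ι Y a + ι Y b)
    (hι_smul : ∀ Y (r : ℝ) a, ι Y (r • a) = r • ι Y a)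
    (hCartan : ∀ Y η, L Y η = ι Y (d η) + d (ι Y η))
    (hLι : ∀ Y Z η, ι ⁅Y, Z⁆ η = L Y (ι Z η) - ι Z (L Y η))
    (hιι : ∀ Y Z η, ι Y (ι Z η) = - ι Z (ι Y η))
    (ω : Ω) (hω : d ω = 0)
    (br : (𝔛 × Ω) → (𝔛 × Ω) → (𝔛 × Ω))
    (hbr : ∀ e₁ e₂, br e₁ e₂ = (⁅e₁.1, e₂.1⁆,
        L e₁.1 e₂.2 - L e₂.1 e₁.2 - (1/2 : ℝ) • d (ι e₁.1 e₂.2 - ι e₂.1 e₁.2)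
          + ι e₁.1 (ι e₂.1 ω))) :
    ∀ e₁ ∈ {e : 𝔛 × Ω | d e.2 = - ι e.1 ω},
      ∀ e₂ ∈ {e : 𝔛 × Ω | d e.2 = - ι e.1 ω},
        br e₁ e₂ ∈ {e : 𝔛 × Ω | d e.2 = - ι e.1 ω} := by
  rintro ⟨X, α⟩ h₁ ⟨Y, β⟩ h₂
  simp only [Set.mem_setOf_eq] at h₁ h₂ ⊢
  rw [hbr]
  have hd_neg : ∀ a : Ω, d (-a) = - d a := by
    intro a
    have := hd_smul (-1) a
    simpa using this
  have hd_sub : ∀ a b : Ω, d (a - b) = d a - d b := by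
    intro a b
    rw [sub_eq_add_neg, hd_add, hd_neg, sub_eq_add_neg]
  -- d(L X β) = - d (ι X (ι Y ω))
  have h1 : d (L X β) = - d (ι X (ι Y ω)) := by
    rw [hCartan, hd_add, hdd, add_zero, h₂]
    have : ι X (-(ι Y ω)) = -(ι X (ι Y ω)) := by
      have := hι_smul X (-1) (ι Y ω); simpa using this
    rw [this, hd_neg]
  -- d(L Y α) = d (ι X (ι Y ω))
  have h2 : d (L Y α) = d (ι X (ι Y ω)) := by
    rw [hCartan, hd_add, hdd, add_zero, h₁]
    have : ι Y (-(ι X ω)) = -(ι Y (ι X ω)) := by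
      have := hι_smul Y (-1) (ι X ω); simpa using this
    rw [this, hd_neg, hιι, hd_neg, neg_neg]
  -- ι ⁅X,Y⁆ ω = d (ι X (ι Y ω))
  have h3 : ι ⁅X, Y⁆ ω = d (ι X (ι Y ω)) := by
    rw [hLι, hCartan, hCartan, hω]
    have hdιY : d (ι Y ω) = 0 := by
      have : d (d β) = 0 := hdd β
      rw [h₂, hd_neg, neg_eq_zero] at this
      exact this
    have hdιX : d (ι X ω) = 0 := by
      have : d (d α) = 0 := hdd α
      rw [h₁, hd_neg, neg_eq_zero] at this
      exact this
    have hι0 : ι X (0 : Ω) = 0 := by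
      have := hι_smul X 0 ω; simpa using this
    have hι0' : ι Y (0 : Ω) = 0 := by
      have := hι_smul Y 0 ω; simpa using this
    simp [hdιY, hdιX, hι0, hι0']
  rw [hd_add, hd_sub, hd_sub, h1, h2, hd_smul, hdd, h3, smul_zero]
  abel
end
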